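/- Consider the incremental pair-extraction procedure: given the sorted list L1 of timestamps of type-a_1 events and L2 of type-a_2 events in a trace, a previously recorded threshold ts_last, and a lookback bound, the procedure first removes from both lists all timestamps strictly less than ts_last and then greedily pairs each remaining ts_i ∈ L1 with the earliest unused ts_j ∈ L2 satisfying ts_i ≤ ts_j and ts_j − ts_i ≤ lookback. Then: (1) every produced pair (ts_i, ts_j) satisfies ts_last ≤ ts_i ≤ ts_j ≤ ts_i + lookback; (2) the second components of distinct produced pairs are distinct; and (3) the produced pairs are exactly the pairs that the greedy non-overlapping extraction would produce on the full lists restricted to timestamps ≥ ts_last. -/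

import Mathlib

/-!
Every pair `(x, y)` emitted by `greedy` takes `y` as the head of the part of the second list
left after dropping the elements `< x`, so `x ≤ y ≤ x + lookback`, and the recursion then
continues on the tail after `y`. Hence the second components are drawn from successive,
disjoint suffixes of a strictly increasing list and are strictly increasing themselves.
-/

/-- Greedy non-overlapping pair extraction: each timestamp `x` of the first list is
paired with the minimal unused timestamp `y` of the second list satisfying `x ≤ y` and
`y - x ≤ lookback`; if the minimal unused `y ≥ x` is beyond the lookback, `x` produces
no pair (no larger `y` can qualify). -/
def greedy (lookback : ℤ) : List ℤ → List ℤ → List (ℤ × ℤ)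
  | [], _ => []
  | x :: xs, ys =>
    match ys.dropWhile (fun y => decide (y < x)) with
    | [] => greedy lookback xs ys
    | y :: rest =>
      if y - x ≤ lookback then (x, y) :: greedy lookback xs rest
      else greedy lookback xs ys

open List

theorem List.eq_false_of_dropWhile_eq_cons {α : Type*} {p : α → Bool} {l rest : List α} {a : α}
    (h : l.dropWhile p = a :: rest) : p a = false := by
  simpa [h] using head_dropWhile_not p (l := l) (by simp [h])

section

variable (lookback : ℤ)

theorem mem_greedy {xs ys : List ℤ} {p : ℤ × ℤ} (hp : p ∈ greedy lookback xs ys) :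
    p.1 ∈ xs ∧ p.2 ∈ ys ∧ p.1 ≤ p.2 ∧ p.2 ≤ p.1 + lookback := by
  fun_induction greedy lookback xs ys with
  | case1 => simp at hp
  | case2 x _ _ _ ih | case4 x _ _ _ _ _ _ ih =>
    obtain ⟨hx, hy, h⟩ := ih hp
    exact ⟨mem_cons_of_mem x hx, hy, h⟩
  | case3 x xs ys y rest hdw hle ih =>
    have hsub : y :: rest <+ ys := hdw ▸ dropWhile_sublist _
    rcases mem_cons.mp hp with rfl | hp
    · have hxy : ¬y < x := by simpa using eq_false_of_dropWhile_eq_cons hdw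
      exact ⟨mem_cons_self, hsub.mem mem_cons_self, not_lt.mp hxy, by omega⟩
    · obtain ⟨hx, hy, h⟩ := ih hp
      exact ⟨mem_cons_of_mem x hx, hsub.mem (mem_cons_of_mem y hy), h⟩

theorem pairwise_snd_lt_greedy (xs : List ℤ) {ys : List ℤ} (hys : ys.Pairwise (· < ·)) :
    (greedy lookback xs ys).Pairwise (fun p q => p.2 < q.2) := by
  fun_induction greedy lookback xs ys with
  | case1 => exact Pairwise.nil
  | case2 _ _ _ _ ih | case4 _ _ _ _ _ _ _ ih => exact ih hys
  | case3 _ _ _ y rest hdw _ ih =>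
    obtain ⟨hy_lt, hrest⟩ := pairwise_cons.mp (hys.sublist (hdw ▸ dropWhile_sublist _))
    exact pairwise_cons.mpr ⟨fun q hq => hy_lt q.2 (mem_greedy lookback hq).2.1, ih hrest⟩

end

theorem stmt6_general (L1 L2 : List ℤ) (h2 : L2.Chain' (· < ·))
    (tsLast lookback : ℤ)
    (pairs : List (ℤ × ℤ))
    (hpairs : pairs = greedy lookback
      (L1.filter (fun x => decide (tsLast ≤ x)))
      (L2.filter (fun x => decide (tsLast ≤ x)))) :
    (∀ p ∈ pairs, tsLast ≤ p.1 ∧ p.1 ≤ p.2 ∧ p.2 ≤ p.1 + lookback) ∧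
    (pairs.Pairwise (fun p q => p.2 ≠ q.2)) ∧
    (pairs = greedy lookback
      (L1.filter (fun x => decide (tsLast ≤ x)))
      (L2.filter (fun x => decide (tsLast ≤ x)))) := by
  subst hpairs
  refine ⟨fun p hp => ?_, ?_, rfl⟩
  · obtain ⟨hx, -, hxy, hyx⟩ := mem_greedy lookback hp
    exact ⟨of_decide_eq_true (mem_filter.mp hx).2, hxy, hyx⟩
  · have hL2 := (isChain_iff_pairwise.mp h2).filter (fun x => decide (tsLast ≤ x))
    exact (pairwise_snd_lt_greedy lookback _ hL2).imp ne_of_lt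

/-- For strictly increasing lists `L1`, `L2`, the incremental procedure
(first drop all timestamps `< ts_last`, then pair greedily) produces pairs `(ts_i, ts_j)`
with (1) `ts_last ≤ ts_i ≤ ts_j ≤ ts_i + lookback`, (2) pairwise distinct second
components, and (3) exactly the pairs the greedy extraction produces on the full lists
restricted to timestamps `≥ ts_last`. -/
theorem stmt6 (L1 L2 : List ℤ) (h1 : L1.Chain' (· < ·)) (h2 : L2.Chain' (· < ·))
    (tsLast lookback : ℤ) (hlb : 0 ≤ lookback)
    (pairs : List (ℤ × ℤ))
    (hpairs : pairs = greedy lookback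
      (L1.filter (fun x => decide (tsLast ≤ x)))
      (L2.filter (fun x => decide (tsLast ≤ x)))) :
    (∀ p ∈ pairs, tsLast ≤ p.1 ∧ p.1 ≤ p.2 ∧ p.2 ≤ p.1 + lookback) ∧
    (pairs.Pairwise (fun p q => p.2 ≠ q.2)) ∧
    (pairs = greedy lookback
      (L1.filter (fun x => decide (tsLast ≤ x)))
      (L2.filter (fun x => decide (tsLast ≤ x)))) :=
  stmt6_general L1 L2 h2 tsLast lookback pairs hpairs
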